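/- Let (L, σ) be a σ-extension of a σ-field (K, σ) and let a ∈ L be σ-algebraic over K. Then there exists b ∈ K⟨a⟩ such that: (1) b is σ-conjugate to a over K⟨a⟩, i.e., b = σ(x)·a·x^{−1} for some nonzero x ∈ K⟨a⟩; (2) b is σ-algebraic over K and the minimal polynomial P_b of b over (K, σ) is irreducible in K[T;σ]; and (3) P_a(T) = Q(T)·P_b(T)·R(T) for some Q(T), R(T) ∈ K[T;σ], where P_a is the minimal polynomial of a over (K, σ). -/
import Mathlib


open Polynomial

variable {K : Type*} [Field K]

/-- `skewN σ i a = σ^{i-1}(a)⋯σ(a)·a`, with `skewN σ 0 a = 1`. -/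
def skewN (σ : K →+* K) : ℕ → K → K
  | 0, _ => 1
  | i + 1, a => σ (skewN σ i a) * a

/-- Right evaluation of a skew polynomial `P = Σ aᵢ Tⁱ` at `a`: `P(a) = Σ aᵢ Nᵢ(a)`. -/
noncomputable def skewEval (σ : K →+* K) (P : Polynomial K) (a : K) : K :=
  ∑ i ∈ P.support, P.coeff i * skewN σ i a

/-- Multiplication in the skew polynomial ring `K[T;σ]` (with `T·a = σ(a)·T`),
using `Polynomial K` as the carrier of coefficient sequences. -/
noncomputable def skewMul (σ : K →+* K) (P Q : Polynomial K) : Polynomial K :=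
  ∑ i ∈ P.support, ∑ j ∈ Q.support,
    Polynomial.C (P.coeff i * (⇑σ)^[i] (Q.coeff j)) * Polynomial.X ^ (i + j)

/-- In a σ-extension `(L, σL)` of the σ-subfield `K`, the element `a` is σ-algebraic
over `K`: it is a right root of some nonzero skew polynomial with coefficients in `K`. -/
def IsSkewAlgebraic {L : Type*} [Field L] (σL : L →+* L) (K : Subfield L) (a : L) : Prop :=
  ∃ P : Polynomial L, P ≠ 0 ∧ (∀ i, P.coeff i ∈ K) ∧ skewEval σL P a = 0

/-- The coefficients of `P` all lie in the subfield `K`. -/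
def CoeffsIn {L : Type*} [Field L] (K : Subfield L) (P : Polynomial L) : Prop :=
  ∀ i, P.coeff i ∈ K

/-- `P` is the minimal skew polynomial of `a` over `(K, σ)`: `P` is monic with coefficients
in `K`, and the skew polynomials over `K` having `a` as a right root are exactly the left
multiples of `P` in `K[T;σ]`. -/
def IsMinSkewPolyOf {L : Type*} [Field L] (σL : L →+* L) (K : Subfield L)
    (P : Polynomial L) (a : L) : Prop :=
  P.Monic ∧ CoeffsIn K P ∧
    ∀ Q : Polynomial L, (CoeffsIn K Q ∧ skewEval σL Q a = 0) ↔
      ∃ R : Polynomial L, CoeffsIn K R ∧ Q = skewMul σL R P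

/-- `P` is a unit of the skew polynomial ring `K[T;σ]`, i.e. a nonzero constant from `K`. -/
def IsSkewUnit {L : Type*} [Field L] (K : Subfield L) (P : Polynomial L) : Prop :=
  ∃ c : L, c ≠ 0 ∧ c ∈ K ∧ P = Polynomial.C c

/-- `P` is irreducible in `K[T;σ]`: a nonunit such that in every factorization
`P = Q·R` within `K[T;σ]`, one of the factors is a unit. -/
def IsSkewIrreducible {L : Type*} [Field L] (σL : L →+* L) (K : Subfield L)
    (P : Polynomial L) : Prop :=
  CoeffsIn K P ∧ ¬ IsSkewUnit K P ∧
    ∀ Q R : Polynomial L, CoeffsIn K Q → CoeffsIn K R → P = skewMul σL Q R →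
      IsSkewUnit K Q ∨ IsSkewUnit K R

/-- `K⟨a⟩`: the smallest subfield of `L` containing `K` and `a` and stable under `σ`. -/
def skewAdjoin {L : Type*} [Field L] (σL : L →+* L) (K : Subfield L) (a : L) : Subfield L :=
  sInf {F : Subfield L | (K : Set L) ⊆ (F : Set L) ∧ a ∈ F ∧ ∀ x ∈ F, σL x ∈ F}

section Lemmas
variable (σ : K →+* K)

lemma skewN_succ' (i : ℕ) (a : K) :
    skewN σ (i+1) a = (⇑σ)^[i] a * skewN σ i a := by
  induction i with
  | zero => simp [skewN]
  | succ i ih =>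
      rw (occs := .pos [1]) [skewN, ih]
      rw [map_mul, Function.iterate_succ_apply', skewN]
      ring

lemma skewN_add (i j : ℕ) (a : K) :
    skewN σ (i + j) a = (⇑σ)^[i] (skewN σ j a) * skewN σ i a := by
  induction j with
  | zero => simp [skewN]
  | succ j ih =>
      rw [show i + (j+1) = (i+j)+1 by ring, skewN_succ', ih, skewN_succ',
        Function.iterate_add_apply, iterate_map_mul]
      ring

lemma skewEval_def (P : Polynomial K) (a : K) :
    skewEval σ P a = P.sum fun i pi => pi * skewN σ i a := rfl

lemma skewMul_def (P Q : Polynomial K) :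
    skewMul σ P Q = P.sum fun i pi => Q.sum fun j qj =>
      Polynomial.C (pi * (⇑σ)^[i] qj) * Polynomial.X ^ (i + j) := rfl

lemma skewEval_add (P Q : Polynomial K) (a : K) :
    skewEval σ (P + Q) a = skewEval σ P a + skewEval σ Q a := by
  simp only [skewEval_def]
  exact Polynomial.sum_add_index _ _ _ (by simp) (by intros; ring)

lemma skewEval_monomial (i : ℕ) (c a : K) :
    skewEval σ (Polynomial.monomial i c) a = c * skewN σ i a := by
  rw [skewEval_def]
  exact Polynomial.sum_monomial_index _ _ (by simp)

lemma skewMul_monomial (i j : ℕ) (c d : K) :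
    skewMul σ (Polynomial.monomial i c) (Polynomial.monomial j d)
      = Polynomial.monomial (i + j) (c * (⇑σ)^[i] d) := by
  rw [skewMul_def, Polynomial.sum_monomial_index, Polynomial.sum_monomial_index]
  · rw [Polynomial.C_mul_X_pow_eq_monomial]
  · simp [iterate_map_zero]
  · simp [Polynomial.sum]

lemma skewMul_add_left (P P' Q : Polynomial K) :
    skewMul σ (P + P') Q = skewMul σ P Q + skewMul σ P' Q := by
  simp only [skewMul_def]
  refine Polynomial.sum_add_index _ _ _ (fun i => by simp [Polynomial.sum]) ?_
  intro i b c
  rw [← Polynomial.sum_add]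
  congr 1; funext j qj
  rw [add_mul, map_add, add_mul]

lemma skewMul_add_right (P Q Q' : Polynomial K) :
    skewMul σ P (Q + Q') = skewMul σ P Q + skewMul σ P Q' := by
  simp only [skewMul_def]
  rw [← Polynomial.sum_add]
  congr 1; funext i pi
  refine Polynomial.sum_add_index _ _ _ (fun j => by simp [iterate_map_zero]) ?_
  intro j b c
  rw [iterate_map_add, mul_add, Polynomial.C_add, add_mul]

lemma skewMul_zero_left (Q : Polynomial K) : skewMul σ 0 Q = 0 := by
  simp [skewMul_def, Polynomial.sum]

lemma skewMul_zero_right (P : Polynomial K) : skewMul σ P 0 = 0 := by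
  simp [skewMul_def, Polynomial.sum]

end Lemmas
section Lemmas2
variable (σ : K →+* K)

lemma skewMul_one_left (P : Polynomial K) : skewMul σ 1 P = P := by
  induction P using Polynomial.induction_on' with
  | add p q hp hq => rw [skewMul_add_right, hp, hq]
  | monomial n c =>
      rw [show (1 : Polynomial K) = Polynomial.monomial 0 1 by simp, skewMul_monomial]
      simp

lemma skewMul_one_right (P : Polynomial K) : skewMul σ P 1 = P := by
  induction P using Polynomial.induction_on' with
  | add p q hp hq => rw [skewMul_add_left, hp, hq]
  | monomial n c =>
      rw [show (1 : Polynomial K) = Polynomial.monomial 0 1 by simp, skewMul_monomial]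
      simp [iterate_map_one]

lemma skewMul_C_left (c : K) (P : Polynomial K) :
    skewMul σ (Polynomial.C c) P = Polynomial.C c * P := by
  induction P using Polynomial.induction_on' with
  | add p q hp hq => rw [skewMul_add_right, hp, hq, mul_add]
  | monomial n d =>
      rw [show (Polynomial.C c) = Polynomial.monomial 0 c by simp, skewMul_monomial]
      simp [Polynomial.C_mul_monomial]

lemma skewMul_assoc (P Q R : Polynomial K) :
    skewMul σ (skewMul σ P Q) R = skewMul σ P (skewMul σ Q R) := by
  induction P using Polynomial.induction_on' with
  | add p p' hp hp' => simp only [skewMul_add_left, hp, hp']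
  | monomial i c =>
    induction Q using Polynomial.induction_on' with
    | add q q' hq hq' => simp only [skewMul_add_left, skewMul_add_right, hq, hq']
    | monomial j d =>
      induction R using Polynomial.induction_on' with
      | add r r' hr hr' => simp only [skewMul_add_right, hr, hr']
      | monomial k e =>
          rw [skewMul_monomial, skewMul_monomial, skewMul_monomial, skewMul_monomial]
          rw [add_assoc, mul_assoc, iterate_map_mul, Function.iterate_add_apply]

lemma skewEval_skewMul_monomial (i : ℕ) (c : K) (Q : Polynomial K) (a : K) :
    skewEval σ (skewMul σ (Polynomial.monomial i c) Q) a
      = c * (⇑σ)^[i] (skewEval σ Q a) * skewN σ i a := by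
  induction Q using Polynomial.induction_on' with
  | add q q' hq hq' =>
      rw [skewMul_add_right, skewEval_add, hq, hq', skewEval_add, iterate_map_add]
      ring
  | monomial j d =>
      rw [skewMul_monomial, skewEval_monomial, skewEval_monomial, skewN_add,
        iterate_map_mul]
      ring

lemma skewEval_skewMul (P Q : Polynomial K) (a : K) :
    skewEval σ (skewMul σ P Q) a
      = P.sum fun i pi => pi * (⇑σ)^[i] (skewEval σ Q a) * skewN σ i a := by
  induction P using Polynomial.induction_on' with
  | add p p' hp hp' =>
      rw [skewMul_add_left, skewEval_add, hp, hp']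
      exact (Polynomial.sum_add_index _ _ _ (by simp) (by intros; ring)).symm
  | monomial i c =>
      rw [skewEval_skewMul_monomial]
      exact (Polynomial.sum_monomial_index (n := i) c
        (fun j pj => pj * (⇑σ)^[j] (skewEval σ Q a) * skewN σ j a) (by simp)).symm

lemma skewEval_skewMul_of_root (P Q : Polynomial K) (a : K)
    (h : skewEval σ Q a = 0) : skewEval σ (skewMul σ P Q) a = 0 := by
  rw [skewEval_skewMul, h]
  simp [Polynomial.sum, iterate_map_zero]

lemma skewN_conj (a c : K) (hc : c ≠ 0) (i : ℕ) :
    skewN σ i (σ c * a * c⁻¹) = (⇑σ)^[i] c * skewN σ i a * c⁻¹ := by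
  induction i with
  | zero => simp [skewN, mul_inv_cancel₀ hc]
  | succ i ih =>
      have hσc : σ c ≠ 0 := fun h => hc (σ.injective (by simp [h]))
      rw [skewN, ih, skewN, map_mul, map_mul, map_inv₀, Function.iterate_succ_apply']
      field_simp

lemma skewEval_skewMul_conj (P Q : Polynomial K) (a : K)
    (hc : skewEval σ Q a ≠ 0) :
    skewEval σ (skewMul σ P Q) a
      = skewEval σ P (σ (skewEval σ Q a) * a * (skewEval σ Q a)⁻¹) * skewEval σ Q a := by
  set c := skewEval σ Q a with hcdef
  rw [skewEval_skewMul, skewEval_def σ P (σ c * a * c⁻¹), Polynomial.sum, Polynomial.sum,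
    Finset.sum_mul]
  refine Finset.sum_congr rfl fun i _ => ?_
  rw [skewN_conj σ a c hc]
  field_simp
  ring

end Lemmas2

section Lemmas3
variable {L : Type*} [Field L] (σ : L →+* L) (K : Subfield L)

lemma iterate_mem (hK : ∀ x ∈ K, σ x ∈ K) (i : ℕ) {x : L} (hx : x ∈ K) :
    (⇑σ)^[i] x ∈ K := by
  induction i with
  | zero => simpa using hx
  | succ i ih => rw [Function.iterate_succ_apply']; exact hK _ ih

lemma coeffsIn_add {P Q : Polynomial L} (hP : CoeffsIn K P) (hQ : CoeffsIn K Q) :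
    CoeffsIn K (P + Q) := fun n => by
  rw [Polynomial.coeff_add]; exact K.add_mem (hP n) (hQ n)

lemma coeffsIn_monomial (i : ℕ) {c : L} (hc : c ∈ K) :
    CoeffsIn K (Polynomial.monomial i c) := fun n => by
  rw [Polynomial.coeff_monomial]
  split <;> simp [hc, K.zero_mem]

lemma coeffsIn_one : CoeffsIn K (1 : Polynomial L) := by
  simpa using coeffsIn_monomial K 0 K.one_mem

lemma coeffsIn_zero : CoeffsIn K (0 : Polynomial L) := fun n => by
  rw [Polynomial.coeff_zero]; exact K.zero_mem

lemma coeffsIn_skewMul (hK : ∀ x ∈ K, σ x ∈ K) {P Q : Polynomial L}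
    (hP : CoeffsIn K P) (hQ : CoeffsIn K Q) : CoeffsIn K (skewMul σ P Q) := by
  intro n
  rw [skewMul]
  rw [Polynomial.finset_sum_coeff]
  refine K.sum_mem fun i _ => ?_
  rw [Polynomial.finset_sum_coeff]
  refine K.sum_mem fun j _ => ?_
  rw [Polynomial.coeff_C_mul, Polynomial.coeff_X_pow]
  split
  · rw [mul_one]; exact K.mul_mem (hP i) (iterate_mem σ K hK i (hQ j))
  · rw [mul_zero]; exact K.zero_mem

lemma natDegree_skewMul_le (P Q : Polynomial L) :
    (skewMul σ P Q).natDegree ≤ P.natDegree + Q.natDegree := by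
  rw [skewMul]
  refine Polynomial.natDegree_sum_le_of_forall_le _ _ fun i hi => ?_
  refine Polynomial.natDegree_sum_le_of_forall_le _ _ fun j hj => ?_
  refine le_trans (Polynomial.natDegree_C_mul_le _ _) ?_
  refine le_trans (Polynomial.natDegree_X_pow_le _) ?_
  exact Nat.add_le_add (Polynomial.le_natDegree_of_mem_supp i hi)
    (Polynomial.le_natDegree_of_mem_supp j hj)

lemma coeff_skewMul_top (P Q : Polynomial L) :
    (skewMul σ P Q).coeff (P.natDegree + Q.natDegree)
      = P.leadingCoeff * (⇑σ)^[P.natDegree] Q.leadingCoeff := by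
  rw [skewMul]
  rw [Polynomial.finset_sum_coeff]
  simp only [Polynomial.finset_sum_coeff, Polynomial.coeff_C_mul, Polynomial.coeff_X_pow]
  rw [← Finset.sum_product']
  rw [Finset.sum_eq_single (P.natDegree, Q.natDegree)]
  · rw [if_pos rfl, mul_one, Polynomial.leadingCoeff, Polynomial.leadingCoeff]
  · rintro ⟨i, j⟩ hij hne
    rw [Finset.mem_product] at hij
    have hi := Polynomial.le_natDegree_of_mem_supp i hij.1
    have hj := Polynomial.le_natDegree_of_mem_supp j hij.2
    have : ¬ (P.natDegree + Q.natDegree = i + j) := by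
      rintro h
      exact hne (by simp only [Prod.mk.injEq]; omega)
    simp [if_neg this]
  · intro h
    rw [Finset.mem_product] at h
    push_neg at h
    rw [if_pos rfl, mul_one]
    rcases Decidable.em (P.natDegree ∈ P.support) with hp | hp
    · have h2 := h hp
      rw [Polynomial.notMem_support_iff] at h2
      rw [h2, iterate_map_zero, mul_zero]
    · rw [Polynomial.notMem_support_iff] at hp
      rw [hp, zero_mul]

lemma skewMul_ne_zero {P Q : Polynomial L} (hP : P ≠ 0) (hQ : Q ≠ 0) :
    skewMul σ P Q ≠ 0 ∧ (skewMul σ P Q).natDegree = P.natDegree + Q.natDegree := by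
  have hlc : P.leadingCoeff * (⇑σ)^[P.natDegree] Q.leadingCoeff ≠ 0 := by
    refine mul_ne_zero (Polynomial.leadingCoeff_ne_zero.mpr hP) ?_
    have hinj : Function.Injective ((⇑σ)^[P.natDegree]) :=
      Function.Injective.iterate σ.injective _
    intro h
    apply Polynomial.leadingCoeff_ne_zero.mpr hQ
    apply hinj
    rw [h, iterate_map_zero]
  have hco := coeff_skewMul_top σ P Q
  have hne : skewMul σ P Q ≠ 0 := fun h => by
    rw [h, Polynomial.coeff_zero] at hco; exact hlc hco.symm
  refine ⟨hne, le_antisymm (natDegree_skewMul_le σ P Q) ?_⟩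
  exact Polynomial.le_natDegree_of_ne_zero (by rw [hco]; exact hlc)

end Lemmas3

section Lemmas4
variable {L : Type*} [Field L] (σ : L →+* L) (K : Subfield L)

lemma skewAdjoin_mem_iff {a x : L} :
    x ∈ skewAdjoin σ K a ↔ ∀ F ∈ {F : Subfield L | (K : Set L) ⊆ (F : Set L) ∧ a ∈ F ∧
      ∀ y ∈ F, σ y ∈ F}, x ∈ F := Subfield.mem_sInf

lemma subset_skewAdjoin (a : L) {x : L} (hx : x ∈ K) : x ∈ skewAdjoin σ K a :=
  Subfield.mem_sInf.mpr fun _ hF => hF.1 hx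

lemma self_mem_skewAdjoin (a : L) : a ∈ skewAdjoin σ K a :=
  Subfield.mem_sInf.mpr fun _ hF => hF.2.1

lemma skewAdjoin_stable (a : L) {x : L} (hx : x ∈ skewAdjoin σ K a) :
    σ x ∈ skewAdjoin σ K a :=
  Subfield.mem_sInf.mpr fun F hF => hF.2.2 x (Subfield.mem_sInf.mp hx F hF)

lemma skewAdjoin_le (a b : L) (hK : ∀ x ∈ K, σ x ∈ K) (hb : b ∈ skewAdjoin σ K a) :
    skewAdjoin σ K b ≤ skewAdjoin σ K a := by
  apply sInf_le
  exact ⟨fun x hx => subset_skewAdjoin σ K a hx, hb, fun x hx => skewAdjoin_stable σ K a hx⟩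

lemma skewN_mem_skewAdjoin (a : L) (i : ℕ) : skewN σ i a ∈ skewAdjoin σ K a := by
  induction i with
  | zero => exact (skewAdjoin σ K a).one_mem
  | succ i ih =>
      exact (skewAdjoin σ K a).mul_mem (skewAdjoin_stable σ K a ih) (self_mem_skewAdjoin σ K a)

lemma skewEval_mem_skewAdjoin (a : L) {P : Polynomial L} (hP : CoeffsIn K P) :
    skewEval σ P a ∈ skewAdjoin σ K a := by
  rw [skewEval]
  refine (skewAdjoin σ K a).sum_mem fun i _ => ?_
  exact (skewAdjoin σ K a).mul_mem (subset_skewAdjoin σ K a (hP i))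
    (skewN_mem_skewAdjoin σ K a i)

lemma skewMul_monomial_left (k : ℕ) (c : L) (Q : Polynomial L) :
    skewMul σ (Polynomial.monomial k c) Q = Polynomial.C c * Polynomial.X ^ k
      * Q.map ((σ ^ k : L →+* L)) := by
  induction Q using Polynomial.induction_on' with
  | add q q' hq hq' => rw [skewMul_add_right, hq, hq', Polynomial.map_add, mul_add]
  | monomial j d =>
      rw [skewMul_monomial, Polynomial.map_monomial]
      rw [← Polynomial.C_mul_X_pow_eq_monomial, ← Polynomial.C_mul_X_pow_eq_monomial]
      rw [RingHom.coe_pow]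
      rw [Polynomial.C_mul, pow_add]
      ring

/-- Division algorithm in `K[T;σ]`. -/
lemma skew_division (hK : ∀ x ∈ K, σ x ∈ K) (A : Polynomial L) (hA : CoeffsIn K A)
    (hA0 : A ≠ 0) :
    ∀ n (B : Polynomial L), B.natDegree ≤ n → CoeffsIn K B →
      ∃ S R : Polynomial L, CoeffsIn K S ∧ CoeffsIn K R ∧
        B = skewMul σ S A + R ∧ R.degree < A.degree := by
  intro n
  induction n using Nat.strong_induction_on with
  | _ n ih =>
    intro B hBn hB
    rcases lt_or_ge B.degree A.degree with hdeg | hdeg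
    · exact ⟨0, B, coeffsIn_zero K, hB, by rw [skewMul_zero_left, zero_add], hdeg⟩
    have hB0 : B ≠ 0 := by
      intro h
      rw [h, Polynomial.degree_zero] at hdeg
      exact hA0 (Polynomial.degree_eq_bot.mp (le_bot_iff.mp hdeg))
    have hdn : A.natDegree ≤ B.natDegree := Polynomial.natDegree_le_natDegree hdeg
    set k := B.natDegree - A.natDegree with hk
    have hk' : k + A.natDegree = B.natDegree := by omega
    have hlA : A.leadingCoeff ≠ 0 := Polynomial.leadingCoeff_ne_zero.mpr hA0
    have hσlA : (⇑σ)^[k] A.leadingCoeff ≠ 0 := by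
      intro h
      exact hlA (Function.Injective.iterate σ.injective k (by rw [h, iterate_map_zero]))
    set c := B.leadingCoeff * ((⇑σ)^[k] A.leadingCoeff)⁻¹ with hc
    have hc0 : c ≠ 0 := mul_ne_zero (Polynomial.leadingCoeff_ne_zero.mpr hB0)
      (inv_ne_zero hσlA)
    have hcK : c ∈ K := K.mul_mem (hB B.natDegree) (K.inv_mem (iterate_mem σ K hK k
      (hA A.natDegree)))
    set M := skewMul σ (Polynomial.monomial k c) A with hM
    have hmono0 : (Polynomial.monomial k c : Polynomial L) ≠ 0 := by
      simpa [Polynomial.monomial_eq_zero_iff] using hc0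
    have hMfacts := skewMul_ne_zero σ (P := Polynomial.monomial k c) (Q := A) hmono0 hA0
    have hMdeg : M.natDegree = B.natDegree := by
      rw [hM, hMfacts.2, Polynomial.natDegree_monomial_eq k hc0, hk']
    have hMlead : M.leadingCoeff = B.leadingCoeff := by
      have : M.leadingCoeff = M.coeff M.natDegree := rfl
      rw [this, hMdeg, ← hk', hM]
      have := coeff_skewMul_top σ (Polynomial.monomial k c) A
      rw [Polynomial.natDegree_monomial_eq k hc0] at this
      rw [this, Polynomial.leadingCoeff_monomial, hc]
      field_simp
    have hMdegree : M.degree = B.degree := by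
      rw [Polynomial.degree_eq_natDegree hMfacts.1, Polynomial.degree_eq_natDegree hB0, hMdeg]
    have hMK : CoeffsIn K M := coeffsIn_skewMul σ K hK (coeffsIn_monomial K k hcK) hA
    rcases eq_or_ne (B - M) 0 with hBM | hBM
    · refine ⟨Polynomial.monomial k c, 0, coeffsIn_monomial K k hcK, coeffsIn_zero K, ?_, ?_⟩
      · rw [← hM, add_zero, ← sub_eq_zero, hBM]
      · rw [Polynomial.degree_zero]
        exact Ne.bot_lt (Polynomial.degree_ne_bot.mpr hA0)
    · have hlt : (B - M).degree < B.degree :=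
        Polynomial.degree_sub_lt hMdegree.symm hB0 hMlead.symm
      have hltn : (B - M).natDegree < n := by
        have := Polynomial.natDegree_lt_natDegree hBM hlt
        omega
      have hBMK : CoeffsIn K (B - M) := by
        intro i
        rw [Polynomial.coeff_sub]
        exact K.sub_mem (hB i) (hMK i)
      obtain ⟨S, R, hSK, hRK, hrep, hRdeg⟩ := ih (B - M).natDegree hltn (B - M) le_rfl hBMK
      refine ⟨Polynomial.monomial k c + S, R, coeffsIn_add K (coeffsIn_monomial K k hcK) hSK,
        hRK, ?_, hRdeg⟩
      rw [skewMul_add_left, ← hM]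
      have : B = M + (B - M) := by ring
      rw [this, hrep]
      ring

lemma skewEval_one (a : L) : skewEval σ (1 : Polynomial L) a = 1 := by
  rw [show (1 : Polynomial L) = Polynomial.monomial 0 1 by simp, skewEval_monomial]
  simp [skewN]

lemma minpoly_eval_zero {P : Polynomial L} {a : L} (hP : IsMinSkewPolyOf σ K P a) :
    skewEval σ P a = 0 :=
  ((hP.2.2 P).mpr ⟨1, coeffsIn_one K, (skewMul_one_left σ P).symm⟩).2

lemma minpoly_natDegree_pos {P : Polynomial L} {a : L} (hP : IsMinSkewPolyOf σ K P a) :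
    1 ≤ P.natDegree := by
  by_contra h
  push_neg at h
  have h0 : P.natDegree = 0 := by omega
  have hP1 : P = 1 := by
    have := Polynomial.eq_C_of_natDegree_eq_zero h0
    rwa [← h0, ← Polynomial.leadingCoeff, hP.1, Polynomial.C_1] at this
  have he := minpoly_eval_zero σ K hP
  rw [hP1, skewEval_one] at he
  exact one_ne_zero he

lemma minpoly_ne_zero {P : Polynomial L} {a : L} (hP : IsMinSkewPolyOf σ K P a) :
    P ≠ 0 := hP.1.ne_zero

lemma exists_minpoly (hK : ∀ x ∈ K, σ x ∈ K) {b : L} (hb : IsSkewAlgebraic σ K b) :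
    ∃ Pb : Polynomial L, IsMinSkewPolyOf σ K Pb b := by
  classical
  obtain ⟨P0, hP00, hP0K, hP0e⟩ := hb
  have hex : ∃ n, ∃ P : Polynomial L, P ≠ 0 ∧ CoeffsIn K P ∧ skewEval σ P b = 0 ∧
      P.natDegree = n := ⟨P0.natDegree, P0, hP00, hP0K, hP0e, rfl⟩
  set n0 := Nat.find hex with hn0
  obtain ⟨P1, hP10, hP1K, hP1e, hP1d⟩ := Nat.find_spec hex
  set c := (P1.leadingCoeff)⁻¹ with hc
  have hl1 : P1.leadingCoeff ≠ 0 := Polynomial.leadingCoeff_ne_zero.mpr hP10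
  have hc0 : c ≠ 0 := inv_ne_zero hl1
  set Pb := Polynomial.C c * P1 with hPb
  have hPbmul : Pb = skewMul σ (Polynomial.C c) P1 := (skewMul_C_left σ c P1).symm
  have hPb0 : Pb ≠ 0 := mul_ne_zero (fun h => hc0 (Polynomial.C_eq_zero.mp h)) hP10
  have hPbe : skewEval σ Pb b = 0 := by
    rw [hPbmul]; exact skewEval_skewMul_of_root σ _ _ _ hP1e
  have hcK : c ∈ K := K.inv_mem (hP1K P1.natDegree)
  have hPbK : CoeffsIn K Pb := fun i => by
    rw [hPb, Polynomial.coeff_C_mul]; exact K.mul_mem hcK (hP1K i)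
  have hPbdeg : Pb.natDegree = n0 := by
    rw [hPb, Polynomial.natDegree_C_mul hc0, hP1d]
  have hPbmonic : Pb.Monic := by
    rw [Polynomial.Monic, hPb, Polynomial.leadingCoeff_mul, Polynomial.leadingCoeff_C, hc]
    exact inv_mul_cancel₀ hl1
  refine ⟨Pb, hPbmonic, hPbK, fun Q => ⟨?_, ?_⟩⟩
  · rintro ⟨hQK, hQe⟩
    obtain ⟨S, R, hSK, hRK, hrep, hRdeg⟩ :=
      skew_division σ K hK Pb hPbK hPb0 Q.natDegree Q le_rfl hQK
    have hRe : skewEval σ R b = 0 := by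
      have := skewEval_add σ (skewMul σ S Pb) R b
      rw [← hrep, hQe, skewEval_skewMul_of_root σ S Pb b hPbe, zero_add] at this
      exact this.symm
    have hR0 : R = 0 := by
      by_contra hR0
      have hlt : R.natDegree < n0 := by
        rw [← hPbdeg]
        exact Polynomial.natDegree_lt_natDegree hR0 hRdeg
      exact Nat.find_min hex hlt ⟨R, hR0, hRK, hRe, rfl⟩
    exact ⟨S, hSK, by rw [hrep, hR0, add_zero]⟩
  · rintro ⟨R, hRK, rfl⟩
    exact ⟨coeffsIn_skewMul σ K hK hRK hPbK,
      skewEval_skewMul_of_root σ R Pb b hPbe⟩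

end Lemmas4

section Main
variable {L : Type*} [Field L]

lemma one_le_natDegree_of_not_skewUnit (K : Subfield L) {Q : Polynomial L}
    (hQ0 : Q ≠ 0) (hQK : CoeffsIn K Q) (h : ¬ IsSkewUnit K Q) : 1 ≤ Q.natDegree := by
  by_contra hd
  push_neg at hd
  have h0 : Q.natDegree = 0 := by omega
  have hQC : Q = Polynomial.C (Q.coeff 0) := Polynomial.eq_C_of_natDegree_eq_zero h0
  refine h ⟨Q.coeff 0, ?_, hQK 0, hQC⟩
  intro hc
  exact hQ0 (by rw [hQC, hc, Polynomial.C_0])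

theorem main_aux (σL : L →+* L) (K : Subfield L) (hK : ∀ x ∈ K, σL x ∈ K) :
    ∀ n (a : L) (Pa : Polynomial L), IsMinSkewPolyOf σL K Pa a → Pa.natDegree ≤ n →
    ∃ b x : L, b ∈ skewAdjoin σL K a ∧ x ∈ skewAdjoin σL K a ∧ x ≠ 0 ∧
      b = σL x * a * x⁻¹ ∧ IsSkewAlgebraic σL K b ∧
      ∃ Pb : Polynomial L, IsMinSkewPolyOf σL K Pb b ∧ IsSkewIrreducible σL K Pb ∧
        ∃ Q R : Polynomial L, CoeffsIn K Q ∧ CoeffsIn K R ∧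
          Pa = skewMul σL Q (skewMul σL Pb R) := by
  intro n
  induction n with
  | zero =>
      intro a Pa hPa hdeg
      have := minpoly_natDegree_pos σL K hPa
      omega
  | succ n ih =>
      intro a Pa hPa hdeg
      have hPa0 : Pa ≠ 0 := minpoly_ne_zero σL K hPa
      have hPadeg : 1 ≤ Pa.natDegree := minpoly_natDegree_pos σL K hPa
      have hPanu : ¬ IsSkewUnit K Pa := by
        rintro ⟨c, hc0, hcK, rfl⟩
        rw [Polynomial.natDegree_C] at hPadeg
        omega
      by_cases hirr : IsSkewIrreducible σL K Pa
      · refine ⟨a, 1, self_mem_skewAdjoin σL K a, (skewAdjoin σL K a).one_mem,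
          one_ne_zero, by simp, ⟨Pa, hPa0, hPa.2.1, minpoly_eval_zero σL K hPa⟩,
          Pa, hPa, hirr, 1, 1, coeffsIn_one K, coeffsIn_one K, ?_⟩
        rw [skewMul_one_right, skewMul_one_left]
      · have hC : ¬ ∀ Q R : Polynomial L, CoeffsIn K Q → CoeffsIn K R →
            Pa = skewMul σL Q R → IsSkewUnit K Q ∨ IsSkewUnit K R :=
          fun h => hirr ⟨hPa.2.1, hPanu, h⟩
        push_neg at hC
        obtain ⟨Q, R, hQK, hRK, hfac, hQnu, hRnu⟩ := hC
        have hQ0 : Q ≠ 0 := fun h => hPa0 (by rw [hfac, h, skewMul_zero_left])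
        have hR0 : R ≠ 0 := fun h => hPa0 (by rw [hfac, h, skewMul_zero_right])
        have hdd : Pa.natDegree = Q.natDegree + R.natDegree := by
          rw [hfac]; exact (skewMul_ne_zero σL hQ0 hR0).2
        have hQd : 1 ≤ Q.natDegree := one_le_natDegree_of_not_skewUnit K hQ0 hQK hQnu
        have hRd : 1 ≤ R.natDegree := one_le_natDegree_of_not_skewUnit K hR0 hRK hRnu
        set c := skewEval σL R a with hc
        have hc0 : c ≠ 0 := by
          intro h0
          obtain ⟨S, hSK, hRfac⟩ := (hPa.2.2 R).mp ⟨hRK, h0⟩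
          have hS0 : S ≠ 0 := fun h => hR0 (by rw [hRfac, h, skewMul_zero_left])
          have := (skewMul_ne_zero σL hS0 hPa0).2
          rw [← hRfac] at this
          omega
        set b := σL c * a * c⁻¹ with hb
        have hQb : skewEval σL Q b = 0 := by
          have h1 : skewEval σL Pa a = 0 := minpoly_eval_zero σL K hPa
          rw [hfac, skewEval_skewMul_conj σL Q R a hc0] at h1
          rcases mul_eq_zero.mp h1 with h | h
          · exact h
          · exact absurd h hc0
        have hbalg : IsSkewAlgebraic σL K b := ⟨Q, hQ0, hQK, hQb⟩
        obtain ⟨Pb, hPb⟩ := exists_minpoly σL K hK hbalg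
        obtain ⟨S, hSK, hQfac⟩ := (hPb.2.2 Q).mp ⟨hQK, hQb⟩
        have hS0 : S ≠ 0 := fun h => hQ0 (by rw [hQfac, h, skewMul_zero_left])
        have hPbdeg : Pb.natDegree ≤ n := by
          have h1 := (skewMul_ne_zero σL hS0 (minpoly_ne_zero σL K hPb)).2
          rw [← hQfac] at h1
          omega
        obtain ⟨b', x', hb'mem, hx'mem, hx'0, hb'conj, hb'alg, Pb', hPb'min, hPb'irr,
          Q', R', hQ'K, hR'K, hPbfac⟩ := ih b Pb hPb hPbdeg
        have hcmem : c ∈ skewAdjoin σL K a := skewEval_mem_skewAdjoin σL K a hRK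
        have hbmem : b ∈ skewAdjoin σL K a := by
          refine (skewAdjoin σL K a).mul_mem ((skewAdjoin σL K a).mul_mem
            (skewAdjoin_stable σL K a hcmem) (self_mem_skewAdjoin σL K a))
            ((skewAdjoin σL K a).inv_mem hcmem)
        have hle : skewAdjoin σL K b ≤ skewAdjoin σL K a :=
          skewAdjoin_le σL K a b hK hbmem
        refine ⟨b', x' * c, hle hb'mem, (skewAdjoin σL K a).mul_mem (hle hx'mem) hcmem,
          mul_ne_zero hx'0 hc0, ?_, hb'alg, Pb', hPb'min, hPb'irr,
          skewMul σL S Q', skewMul σL R' R,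
          coeffsIn_skewMul σL K hK hSK hQ'K, coeffsIn_skewMul σL K hK hR'K hRK, ?_⟩
        · rw [hb'conj, hb, map_mul, mul_inv]
          field_simp
        · rw [skewMul_assoc, ← skewMul_assoc σL Pb' R' R, ← skewMul_assoc σL Q' _ R,
            ← hPbfac, ← skewMul_assoc, ← hQfac, ← hfac]

end Main

/-- Every σ-algebraic element `a` has a σ-conjugate `b = σ(x)·a·x⁻¹` over `K⟨a⟩` which is
σ-algebraic over `K` with irreducible minimal skew polynomial `P_b`, and the minimal skew
polynomial of `a` factors as `P_a = Q·P_b·R` in `K[T;σ]`. -/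
theorem stmt_9 {L : Type*} [Field L] (σL : L →+* L) (K : Subfield L)
    (hK : ∀ x ∈ K, σL x ∈ K) (a : L) (ha : IsSkewAlgebraic σL K a)
    (Pa : Polynomial L) (hPa : IsMinSkewPolyOf σL K Pa a) :
    ∃ b x : L, b ∈ skewAdjoin σL K a ∧ x ∈ skewAdjoin σL K a ∧ x ≠ 0 ∧
      b = σL x * a * x⁻¹ ∧ IsSkewAlgebraic σL K b ∧
      ∃ Pb : Polynomial L, IsMinSkewPolyOf σL K Pb b ∧ IsSkewIrreducible σL K Pb ∧
        ∃ Q R : Polynomial L, CoeffsIn K Q ∧ CoeffsIn K R ∧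
          Pa = skewMul σL Q (skewMul σL Pb R) := by
  exact main_aux σL K hK Pa.natDegree a Pa hPa le_rfl
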